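/- arXiv:2106.04092 — 2 statements merged into one kernel-verified Lean document; each statement's English description precedes it below -/
import Mathlib

section
/- Let a ∈ (0,1), b ≥ 0, M ≥ 1 natural, and let V : ℕ → ℝ and w : ℕ → ℝ≥0 satisfy V(t+1) ≤ a·V(t) + b·∑_{k=t}^{t+M-1} w(k) for all t. Then for all H ≥ M: V(H) ≤ a^H·V(0) + b·∑_{k=0}^{M-1}(∑_{j=0}^{k} a^{H-1-j})·w(k) + b·((1-a^M)/(1-a))·∑_{k=M}^{H-1} a^{H-k-1}·w(k) + b·∑_{k=H}^{H+M-2}(∑_{j=0}^{H+M-2-k} a^j)·w(k). -/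
lemma auxA (a b : ℝ) (ha0 : 0 ≤ a) (hb : 0 ≤ b) (M : ℕ) (V w : ℕ → ℝ)
    (hV : ∀ t, V (t + 1) ≤ a * V t + b * ∑ k ∈ Finset.Ico t (t + M), w k) :
    ∀ H, V H ≤ a ^ H * V 0
      + b * ∑ t ∈ Finset.range H, a ^ (H - 1 - t) * ∑ k ∈ Finset.Ico t (t + M), w k := by
  intro H
  induction H with
  | zero => simp
  | succ H ih =>
    have h1 := hV H
    have h2 : a * V H ≤ a * (a ^ H * V 0
        + b * ∑ t ∈ Finset.range H, a ^ (H - 1 - t) * ∑ k ∈ Finset.Ico t (t + M), w k) :=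
      mul_le_mul_of_nonneg_left ih ha0
    have key : ∑ t ∈ Finset.range (H + 1), a ^ (H + 1 - 1 - t) * ∑ k ∈ Finset.Ico t (t + M), w k
        = a * ∑ t ∈ Finset.range H, a ^ (H - 1 - t) * ∑ k ∈ Finset.Ico t (t + M), w k
          + ∑ k ∈ Finset.Ico H (H + M), w k := by
      rw [Finset.sum_range_succ]
      conv_rhs => rw [Finset.mul_sum]
      congr 1
      · apply Finset.sum_congr rfl
        intro t ht
        have ht' := Finset.mem_range.mp ht
        rw [← mul_assoc, ← pow_succ']
        congr 2
        omega
      · simp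
    calc V (H + 1) ≤ a * V H + b * ∑ k ∈ Finset.Ico H (H + M), w k := h1
      _ ≤ a * (a ^ H * V 0
          + b * ∑ t ∈ Finset.range H, a ^ (H - 1 - t) * ∑ k ∈ Finset.Ico t (t + M), w k)
          + b * ∑ k ∈ Finset.Ico H (H + M), w k := by linarith
      _ = a ^ (H + 1) * V 0
          + b * ∑ t ∈ Finset.range (H + 1), a ^ (H + 1 - 1 - t) * ∑ k ∈ Finset.Ico t (t + M), w k := by
        rw [key]; ring


lemma auxB (a : ℝ) (M H : ℕ) (hM : 1 ≤ M) (hMH : M ≤ H) (w : ℕ → ℝ) :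
    ∑ t ∈ Finset.range H, a ^ (H - 1 - t) * ∑ k ∈ Finset.Ico t (t + M), w k
    = ∑ k ∈ Finset.range M, (∑ j ∈ Finset.range (k + 1), a ^ (H - 1 - j)) * w k
      + (∑ j ∈ Finset.range M, a ^ j) * ∑ k ∈ Finset.Ico M H, a ^ (H - k - 1) * w k
      + ∑ k ∈ Finset.Ico H (H + M - 1),
          (∑ j ∈ Finset.range (H + M - 1 - k), a ^ j) * w k := by
  have swap : ∑ t ∈ Finset.range H, ∑ k ∈ Finset.Ico t (t + M), a ^ (H - 1 - t) * w k
      = ∑ k ∈ Finset.range (H + M - 1),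
          ∑ t ∈ Finset.Ico (k + 1 - M) (min (k + 1) H), a ^ (H - 1 - t) * w k := by
    apply Finset.sum_comm'
    intro t k
    simp only [Finset.mem_range, Finset.mem_Ico, lt_min_iff]
    omega
  have step1 : ∑ t ∈ Finset.range H, a ^ (H - 1 - t) * ∑ k ∈ Finset.Ico t (t + M), w k
      = ∑ k ∈ Finset.range (H + M - 1),
          (∑ t ∈ Finset.Ico (k + 1 - M) (min (k + 1) H), a ^ (H - 1 - t)) * w k := by
    simp_rw [Finset.mul_sum]
    rw [swap]
    simp_rw [Finset.sum_mul]
  rw [step1]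
  -- split range (H+M-1) into [0,M) ∪ [M,H) ∪ [H, H+M-1)
  rw [Finset.range_eq_Ico,
    ← Finset.sum_Ico_consecutive _ (Nat.zero_le H) (by omega : H ≤ H + M - 1),
    ← Finset.sum_Ico_consecutive _ (Nat.zero_le M) hMH]
  congr 1
  congr 1
  · -- k < M
    rw [← Finset.range_eq_Ico]
    apply Finset.sum_congr rfl
    intro k hk
    have hk' := Finset.mem_range.mp hk
    congr 1
    have : min (k + 1) H = k + 1 := by omega
    rw [this]
    have : k + 1 - M = 0 := by omega
    rw [this, ← Finset.range_eq_Ico]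
  · -- M ≤ k < H
    rw [Finset.mul_sum]
    apply Finset.sum_congr rfl
    intro k hk
    have hk' := Finset.mem_Ico.mp hk
    have h1 : min (k + 1) H = k + 1 := Nat.min_eq_left (by omega)
    rw [h1]
    have h2 : ∑ t ∈ Finset.Ico (k + 1 - M) (k + 1), a ^ (H - 1 - t)
        = ∑ i ∈ Finset.range M, a ^ (H - 1 - (k + 1 - M + i)) := by
      have e : k + 1 - (k + 1 - M) = M := by omega
      rw [Finset.sum_Ico_eq_sum_range, e]
    rw [h2]
    have h3 : ∀ i ∈ Finset.range M, a ^ (H - 1 - (k + 1 - M + i))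
        = a ^ (H - k - 1) * a ^ (M - 1 - i) := by
      intro i hi
      have hi' := Finset.mem_range.mp hi
      rw [← pow_add]
      congr 1
      omega
    rw [Finset.sum_congr rfl h3, ← Finset.mul_sum]
    have h4 : ∑ i ∈ Finset.range M, a ^ (M - 1 - i) = ∑ j ∈ Finset.range M, a ^ j :=
      Finset.sum_range_reflect (fun j => a ^ j) M
    rw [h4]
    ring
  · -- H ≤ k < H+M-1
    apply Finset.sum_congr rfl
    intro k hk
    have hk' := Finset.mem_Ico.mp hk
    have h1 : min (k + 1) H = H := Nat.min_eq_right (by omega)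
    rw [h1]
    congr 1
    have h2 : ∑ t ∈ Finset.Ico (k + 1 - M) H, a ^ (H - 1 - t)
        = ∑ i ∈ Finset.range (H + M - 1 - k), a ^ (H - 1 - (k + 1 - M + i)) := by
      have e : H - (k + 1 - M) = H + M - 1 - k := by omega
      rw [Finset.sum_Ico_eq_sum_range, e]
    rw [h2]
    have h3 : ∀ i ∈ Finset.range (H + M - 1 - k), a ^ (H - 1 - (k + 1 - M + i))
        = a ^ (H + M - 1 - k - 1 - i) := by
      intro i hi
      have hi' := Finset.mem_range.mp hi
      congr 1
      omega
    rw [Finset.sum_congr rfl h3]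
    exact Finset.sum_range_reflect (fun j => a ^ j) (H + M - 1 - k)

/-- Inductive bound for a value-function recursion with a sliding window of
disturbance energies of length `M`. -/
theorem stmt_6 (a b : ℝ) (ha0 : 0 < a) (ha1 : a < 1) (hb : 0 ≤ b)
    (M : ℕ) (hM : 1 ≤ M) (V w : ℕ → ℝ) (hw : ∀ k, 0 ≤ w k)
    (hV : ∀ t, V (t + 1) ≤ a * V t + b * ∑ k ∈ Finset.Ico t (t + M), w k) :
    ∀ H, M ≤ H →
      V H ≤ a ^ H * V 0
        + b * ∑ k ∈ Finset.range M, (∑ j ∈ Finset.range (k + 1), a ^ (H - 1 - j)) * w k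
        + b * ((1 - a ^ M) / (1 - a)) * ∑ k ∈ Finset.Ico M H, a ^ (H - k - 1) * w k
        + b * ∑ k ∈ Finset.Ico H (H + M - 1),
            (∑ j ∈ Finset.range (H + M - 1 - k), a ^ j) * w k := by
  intro H hH
  have h := auxA a b ha0.le hb M V w hV H
  rw [auxB a M H hM hH w] at h
  have hne : (1 : ℝ) - a ≠ 0 := sub_ne_zero.mpr (ne_of_gt (by linarith))
  have hgeom : (∑ j ∈ Finset.range M, a ^ j) = (1 - a ^ M) / (1 - a) := by
    rw [geom_sum_eq (ne_of_lt ha1) M,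
      div_eq_div_iff (sub_ne_zero.mpr (ne_of_lt ha1)) hne]
    ring
  rw [hgeom] at h
  exact h.trans (le_of_eq (by ring))
end

section
/- Let ᾱ ≥ α̱ > 0 and M a natural number with M ≥ 2 and M > ᾱ²/α̱² + 1. Suppose V, σ : ℕ → ℝ≥0 and W : ℕ → ℝ≥0 satisfy, for all t: (i) V(t) ≥ α̱·σ(t); (ii) V(t) ≤ ᾱ·σ(t) + γ̄·W(t) with γ̄ ≥ 0; (iii) V(t+1) - V(t) ≤ (ᾱ²/(α̱(M-1)) - α̱)·σ(t) + γ̄·(ᾱ/(α̱(M-1)) + 1)·W(t). Then for every ε̃ with 0 < ε̃ < α̱ - ᾱ²/((M-1)α̱), setting a := 1 - ε̃/ᾱ and b := γ̄·(α̱/ᾱ + 1), we have V(t+1) ≤ a·V(t) + b·W(t) for all t. -/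
/-- Reduction from the value-decrement inequality in `σ` to the contraction
recursion `V (t+1) ≤ a·V t + b·W t`. -/
theorem stmt_9 (alphaLow alphaBar gammaBar : ℝ)
    (h0 : 0 < alphaLow) (h1 : alphaLow ≤ alphaBar) (hg : 0 ≤ gammaBar)
    (M : ℕ) (hM2 : 2 ≤ M) (hM : (M : ℝ) > alphaBar ^ 2 / alphaLow ^ 2 + 1)
    (V σ W : ℕ → ℝ)
    (hV0 : ∀ t, 0 ≤ V t) (hσ0 : ∀ t, 0 ≤ σ t) (hW0 : ∀ t, 0 ≤ W t)
    (hlb : ∀ t, alphaLow * σ t ≤ V t)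
    (hub : ∀ t, V t ≤ alphaBar * σ t + gammaBar * W t)
    (hdec : ∀ t, V (t + 1) - V t ≤
      (alphaBar ^ 2 / (alphaLow * ((M : ℝ) - 1)) - alphaLow) * σ t
        + gammaBar * (alphaBar / (alphaLow * ((M : ℝ) - 1)) + 1) * W t) :
    ∀ ε : ℝ, 0 < ε → ε < alphaLow - alphaBar ^ 2 / (((M : ℝ) - 1) * alphaLow) →
      ∀ t, V (t + 1) ≤ (1 - ε / alphaBar) * V t
        + gammaBar * (alphaLow / alphaBar + 1) * W t := by
  intro ε hε hεlt t
  have hαb : 0 < alphaBar := lt_of_lt_of_le h0 h1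
  have hM2' : (2:ℝ) ≤ (M:ℝ) := by exact_mod_cast hM2
  have hD0 : (0:ℝ) < (M:ℝ) - 1 := by linarith
  have hr : ε ≤ alphaLow - alphaBar ^ 2 / (alphaLow * ((M:ℝ) - 1)) := by
    have e : alphaBar ^ 2 / (((M:ℝ) - 1) * alphaLow)
        = alphaBar ^ 2 / (alphaLow * ((M:ℝ) - 1)) := by ring
    linarith [hεlt, e.le, e.ge]
  have hsw : ε / alphaBar ≤ alphaLow / alphaBar - alphaBar / (alphaLow * ((M:ℝ) - 1)) := by
    have key : alphaLow / alphaBar - alphaBar / (alphaLow * ((M:ℝ) - 1))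
        = (alphaLow - alphaBar ^ 2 / (alphaLow * ((M:ℝ) - 1))) / alphaBar := by
      field_simp
    rw [key]
    gcongr
  have h2 : ε / alphaBar * V t ≤ ε * σ t + ε / alphaBar * (gammaBar * W t) := by
    have h := mul_le_mul_of_nonneg_left (hub t) (le_of_lt (div_pos hε hαb))
    have e : ε / alphaBar * (alphaBar * σ t + gammaBar * W t)
        = ε * σ t + ε / alphaBar * (gammaBar * W t) := by
      field_simp
    linarith [h, e.le, e.ge]
  have hσ : ε * σ t ≤ (alphaLow - alphaBar ^ 2 / (alphaLow * ((M:ℝ) - 1))) * σ t :=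
    mul_le_mul_of_nonneg_right hr (hσ0 t)
  have hW : gammaBar * (ε / alphaBar) * W t
      ≤ gammaBar * (alphaLow / alphaBar - alphaBar / (alphaLow * ((M:ℝ) - 1))) * W t :=
    mul_le_mul_of_nonneg_right (mul_le_mul_of_nonneg_left hsw hg) (hW0 t)
  have hd := hdec t
  nlinarith [hd, h2, hσ, hW]
end
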